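/- Let Q = {P_1,…,P_l} be a measurement scheme that determines any pure state among all states. Then there exists a constant C_Q > 0, independent of ε, such that for every ε > 0, every pure state σ, and every error term f ∈ M_{l×m}(ℝ) with ‖f‖ ≤ ε, the following holds with b := M_Q(σ) + f: every Y* ∈ H(d) which is positive semidefinite and minimizes ‖M_Q(Y) − b‖ over all positive semidefinite Y ∈ H(d) (i.e. ‖M_Q(Y*) − b‖ ≤ ‖M_Q(Y) − b‖ for every positive semidefinite Y) satisfies ‖Y* − σ‖ ≤ C_Q ε. -/

import Mathlib

open Matrix ComplexOrder

noncomputable def frobNorm {n m : Type*} [Fintype n] [Fintype m] {𝕜 : Type*} [RCLike 𝕜]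
    (X : Matrix n m 𝕜) : ℝ :=
  Real.sqrt (∑ i, ∑ j, ‖X i j‖ ^ 2)

def IsPOVM {d m : ℕ} (P : Fin m → Matrix (Fin d) (Fin d) ℂ) : Prop :=
  (∀ j, (P j).PosSemidef) ∧ (∑ j, P j) = 1

def IsMeasScheme {d l m : ℕ} (Q : Fin l → Fin m → Matrix (Fin d) (Fin d) ℂ) : Prop :=
  ∀ i, IsPOVM (Q i)

noncomputable def measMap {d l m : ℕ} (Q : Fin l → Fin m → Matrix (Fin d) (Fin d) ℂ)
    (X : Matrix (Fin d) (Fin d) ℂ) : Matrix (Fin l) (Fin m) ℝ :=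
  Matrix.of fun i j => (Matrix.trace (X * Q i j)).re

noncomputable def pureState {d : ℕ} (ψ : Fin d → ℂ) : Matrix (Fin d) (Fin d) ℂ :=
  Matrix.vecMulVec ψ (star ψ)

def IsState {d : ℕ} (ρ : Matrix (Fin d) (Fin d) ℂ) : Prop :=
  ρ.PosSemidef ∧ ρ.trace = 1

def DeterminesPure {d l m : ℕ} (Q : Fin l → Fin m → Matrix (Fin d) (Fin d) ℂ) : Prop :=
  ∀ ψ : Fin d → ℂ, (∑ k, Complex.normSq (ψ k)) = 1 →
    ∀ ρ : Matrix (Fin d) (Fin d) ℂ, IsState ρ →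
      measMap Q (pureState ψ) = measMap Q ρ → ρ = pureState ψ

noncomputable def posEigCount {d : ℕ} {X : Matrix (Fin d) (Fin d) ℂ} (hX : X.IsHermitian) : ℕ :=
  Nat.card {i : Fin d // 0 < hX.eigenvalues i}

def Kset (d : ℕ) : Set (Matrix (Fin d) (Fin d) ℂ) :=
  {X | ∃ hX : X.IsHermitian, posEigCount hX ≤ 1 ∧ frobNorm X = 1}

noncomputable def opNormHerm {d l m : ℕ}
    (T : Matrix (Fin d) (Fin d) ℂ → Matrix (Fin l) (Fin m) ℝ) : ℝ :=
  sSup {r : ℝ | ∃ X : Matrix (Fin d) (Fin d) ℂ, X.IsHermitian ∧ frobNorm X = 1 ∧ r = frobNorm (T X)}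

/-!
The difference `X = σ - Y` of a pure state `σ = |ψ⟩⟨ψ|` and a positive semidefinite `Y` is
negative semidefinite on `ψ⊥`, hence has at most one positive eigenvalue, and so
`X = t • |v⟩⟨v| - N` with `0 ≤ t ≤ ‖X‖` and `N ≥ 0`. After normalising `‖X‖ = 1` the parameters
`(t, v, N)` range over a compact set, on which `M_Q` does not vanish: `M_Q (t • |v⟩⟨v| - N) = 0`
forces `tr N = t`, since each row of `M_Q` sums to the trace, and then `N / t` is a state with the
same outcome statistics as `|v⟩⟨v|`, so `N = t • |v⟩⟨v|`. Hence `c ‖X‖ ≤ ‖M_Q X‖` for some `c > 0`,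
while comparing the minimiser `Y` with `σ` gives `‖M_Q X‖ ≤ 2ε`.
-/

attribute [local instance] Matrix.frobeniusNormedAddCommGroup Matrix.frobeniusNormedSpace

lemma frobNorm_eq_norm {n m 𝕜 : Type*} [Fintype n] [Fintype m] [RCLike 𝕜] (X : Matrix n m 𝕜) :
    frobNorm X = ‖X‖ := by
  simp only [frobNorm, frobenius_norm_def, Real.rpow_two, Real.sqrt_eq_rpow]

section MeasMap

variable {d l m : ℕ} (Q : Fin l → Fin m → Matrix (Fin d) (Fin d) ℂ)

lemma measMap_sub (X Y : Matrix (Fin d) (Fin d) ℂ) :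
    measMap Q (X - Y) = measMap Q X - measMap Q Y := by
  ext i j
  simp [measMap, Matrix.sub_mul]

lemma measMap_smul (r : ℝ) (X : Matrix (Fin d) (Fin d) ℂ) :
    measMap Q (r • X) = r • measMap Q X := by
  ext i j
  simp [measMap, Complex.real_smul]

lemma continuous_measMap : Continuous (measMap Q) :=
  continuous_matrix fun _ _ =>
    Complex.continuous_re.comp ((continuous_id.matrix_mul continuous_const).matrix_trace)

lemma sum_measMap_apply {Q : Fin l → Fin m → Matrix (Fin d) (Fin d) ℂ} (hQ : IsMeasScheme Q)
    (X : Matrix (Fin d) (Fin d) ℂ) (i : Fin l) :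
    ∑ j, measMap Q X i j = X.trace.re := by
  simp only [measMap, of_apply]
  rw [← Complex.re_sum, ← trace_sum, ← Matrix.mul_sum, (hQ i).2, Matrix.mul_one]

end MeasMap

section PureState

variable {d : ℕ}

lemma posSemidef_pureState (ψ : Fin d → ℂ) : (pureState ψ).PosSemidef :=
  posSemidef_vecMulVec_self_star ψ

lemma trace_pureState {ψ : Fin d → ℂ} (hψ : ∑ k, Complex.normSq (ψ k) = 1) :
    (pureState ψ).trace = 1 := by
  simp [pureState, trace, vecMulVec_apply, Complex.mul_conj, ← Complex.ofReal_sum, hψ]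

lemma norm_pureState {ψ : Fin d → ℂ} (hψ : ∑ k, Complex.normSq (ψ k) = 1) :
    ‖pureState ψ‖ = 1 := by
  simp [← frobNorm_eq_norm, frobNorm, pureState, vecMulVec_apply, mul_pow, ← Finset.mul_sum,
    Complex.sq_norm, hψ]

lemma pureState_mulVec_of_orthogonal {ψ u : Fin d → ℂ} (hu : star ψ ⬝ᵥ u = 0) :
    pureState ψ *ᵥ u = 0 := by
  rw [pureState, vecMulVec_mulVec, hu, MulOpposite.op_zero, zero_smul]

lemma continuous_pureState : Continuous (pureState : (Fin d → ℂ) → Matrix (Fin d) (Fin d) ℂ) :=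
  continuous_id.matrix_vecMulVec continuous_id.star

end PureState

section FiniteDimensional

variable {n : Type*} [Fintype n]

lemma norm_toLp_eq_one_iff {v : n → ℂ} :
    ‖WithLp.toLp 2 v‖ = 1 ↔ ∑ k, Complex.normSq (v k) = 1 := by
  simp [EuclideanSpace.norm_eq, Complex.sq_norm]

lemma isCompact_setOf_sum_normSq_eq_one :
    IsCompact {ψ : n → ℂ | ∑ k, Complex.normSq (ψ k) = 1} := by
  convert (isCompact_sphere (0 : EuclideanSpace ℂ n) 1).image (PiLp.continuous_ofLp 2 _)
  ext ψ
  simp only [Set.mem_ofPred_eq, Set.mem_image, mem_sphere_iff_norm, sub_zero]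
  exact ⟨fun h => ⟨WithLp.toLp 2 ψ, norm_toLp_eq_one_iff.mpr h, rfl⟩,
    fun ⟨ψ, hψ, hψ'⟩ => hψ' ▸ norm_toLp_eq_one_iff.mp hψ⟩

lemma isClosed_setOf_posSemidef : IsClosed {N : Matrix n n ℂ | N.PosSemidef} := by
  simp only [posSemidef_iff_dotProduct_mulVec, Set.ofPred_and, Set.ofPred_forall]
  exact (isClosed_eq continuous_id.matrix_conjTranspose continuous_id).inter <|
    isClosed_iInter fun x => isClosed_le continuous_const <|
      continuous_const.dotProduct (continuous_id.matrix_mulVec continuous_const)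

lemma Matrix.IsHermitian.ofReal_re_trace {N : Matrix n n ℂ} (hN : N.IsHermitian) :
    (N.trace.re : ℂ) = N.trace :=
  Complex.conj_eq_iff_re.mp (by rw [← Complex.star_def, ← trace_conjTranspose, hN])

lemma Matrix.norm_toLp_mulVec_le (X : Matrix n n ℂ) (v : n → ℂ) :
    ‖WithLp.toLp 2 (X *ᵥ v)‖ ≤ ‖X‖ * ‖WithLp.toLp 2 v‖ := by
  simpa only [← frobenius_norm_replicateCol (ι := Unit), replicateCol_mulVec] using
    frobenius_norm_mul X (replicateCol Unit v)

end FiniteDimensional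

theorem DeterminesPure.eq_smul_pureState {d l m : ℕ}
    {Q : Fin l → Fin m → Matrix (Fin d) (Fin d) ℂ} (hdet : DeterminesPure Q) (hQ : IsMeasScheme Q)
    (hl : 0 < l) {t : ℝ} (ht : 0 ≤ t) {v : Fin d → ℂ} (hv : ∑ k, Complex.normSq (v k) = 1)
    {N : Matrix (Fin d) (Fin d) ℂ} (hN : N.PosSemidef) (h : measMap Q N = measMap Q (t • pureState v)) :
    N = t • pureState v := by
  have htr : N.trace = t := by
    have hrow := congrArg (fun M => ∑ j, M ⟨0, hl⟩ j) h
    simp only [sum_measMap_apply hQ, trace_smul, trace_pureState hv] at hrow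
    rw [← hN.1.ofReal_re_trace, hrow]
    simp
  rcases ht.eq_or_lt with rfl | htpos
  · rw [zero_smul, ← hN.trace_eq_zero_iff, htr, Complex.ofReal_zero]
  · have hρ : IsState (t⁻¹ • N) := by
      refine ⟨hN.smul (inv_nonneg.mpr ht), ?_⟩
      rw [trace_smul, htr, Complex.real_smul, ← Complex.ofReal_mul, inv_mul_cancel₀ htpos.ne',
        Complex.ofReal_one]
    have hρv := hdet v hv _ hρ (by
      rw [measMap_smul, h, measMap_smul, smul_smul, inv_mul_cancel₀ htpos.ne', one_smul])
    rw [← hρv, smul_smul, mul_inv_cancel₀ htpos.ne', one_smul]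

section Spectral

variable {n : Type*} [Fintype n] [DecidableEq n]

lemma Matrix.IsHermitian.abs_eigenvalues_le_norm {X : Matrix n n ℂ} (hX : X.IsHermitian) (i : n) :
    |hX.eigenvalues i| ≤ ‖X‖ := by
  have hnorm : ‖hX.eigenvectorBasis i‖ = 1 := hX.eigenvectorBasis.orthonormal.1 i
  simpa [hX.mulVec_eigenvectorBasis, norm_smul, hnorm] using
    X.norm_toLp_mulVec_le (hX.eigenvectorBasis i)

lemma conjStarAlgAut_diagonal_single (U : unitary (Matrix n n ℂ)) (k : n) (c : ℂ) :
    Unitary.conjStarAlgAut ℂ _ U (diagonal (Pi.single k c)) =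
      c • vecMulVec (fun i => (U : Matrix n n ℂ) i k) (star fun i => (U : Matrix n n ℂ) i k) := by
  ext i j
  simp [mul_apply, diagonal, Pi.single_apply, vecMulVec_apply]
  ring

lemma Matrix.IsHermitian.re_dotProduct_mulVec_eigenvectorBasis {X : Matrix n n ℂ}
    (hX : X.IsHermitian) {p q : n} (hpq : p ≠ q) (a b : ℂ) :
    (star (a • ⇑(hX.eigenvectorBasis p) + b • ⇑(hX.eigenvectorBasis q)) ⬝ᵥ
        X *ᵥ (a • ⇑(hX.eigenvectorBasis p) + b • ⇑(hX.eigenvectorBasis q))).re =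
      Complex.normSq a * hX.eigenvalues p + Complex.normSq b * hX.eigenvalues q := by
  have orth : ∀ i j, star ⇑(hX.eigenvectorBasis i) ⬝ᵥ ⇑(hX.eigenvectorBasis j) =
      if i = j then 1 else 0 := fun i j => by
    rw [dotProduct_comm, ← EuclideanSpace.inner_eq_star_dotProduct]
    exact orthonormal_iff_ite.mp hX.eigenvectorBasis.orthonormal i j
  simp only [mulVec_add, mulVec_smul, hX.mulVec_eigenvectorBasis, star_add, star_smul,
    add_dotProduct, dotProduct_add, smul_dotProduct, dotProduct_smul, orth, if_neg hpq,
    if_neg hpq.symm]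
  simp [Complex.real_smul, Complex.normSq_apply]
  ring

lemma Matrix.IsHermitian.eq_of_eigenvalues_pos {X : Matrix n n ℂ} (hX : X.IsHermitian)
    {w : n → ℂ} (hw : ∀ u, star w ⬝ᵥ u = 0 → (star u ⬝ᵥ X *ᵥ u).re ≤ 0) {p q : n}
    (hp : 0 < hX.eigenvalues p) (hq : 0 < hX.eigenvalues q) : p = q := by
  by_contra hpq
  set α := star w ⬝ᵥ ⇑(hX.eigenvectorBasis p)
  set β := star w ⬝ᵥ ⇑(hX.eigenvectorBasis q)
  obtain ⟨a, b, hab, horth⟩ : ∃ a b : ℂ, (a ≠ 0 ∨ b ≠ 0) ∧ a * α + b * β = 0 := by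
    by_cases hα : α = 0
    · exact ⟨1, 0, by simp, by simp [hα]⟩
    · exact ⟨β, -α, Or.inr (neg_ne_zero.mpr hα), by ring⟩
  have hpos : 0 < Complex.normSq a * hX.eigenvalues p + Complex.normSq b * hX.eigenvalues q := by
    rcases hab with ha | hb
    · exact add_pos_of_pos_of_nonneg (mul_pos (Complex.normSq_pos.mpr ha) hp)
        (mul_nonneg (Complex.normSq_nonneg b) hq.le)
    · exact add_pos_of_nonneg_of_pos (mul_nonneg (Complex.normSq_nonneg a) hp.le)
        (mul_pos (Complex.normSq_pos.mpr hb) hq)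
  refine hpos.not_ge ((hX.re_dotProduct_mulVec_eigenvectorBasis hpq a b).symm.trans_le (hw _ ?_))
  simpa [dotProduct_add, dotProduct_smul] using horth

end Spectral

theorem Matrix.IsHermitian.exists_eq_smul_pureState_sub {d : ℕ} (hd : 0 < d)
    {X : Matrix (Fin d) (Fin d) ℂ} (hX : X.IsHermitian) {w : Fin d → ℂ}
    (hw : ∀ u, star w ⬝ᵥ u = 0 → (star u ⬝ᵥ X *ᵥ u).re ≤ 0) :
    ∃ t : ℝ, 0 ≤ t ∧ t ≤ ‖X‖ ∧ ∃ v : Fin d → ℂ, ∑ k, Complex.normSq (v k) = 1 ∧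
      ∃ N : Matrix (Fin d) (Fin d) ℂ, N.PosSemidef ∧ X = t • pureState v - N := by
  have : Nonempty (Fin d) := ⟨⟨0, hd⟩⟩
  obtain ⟨k, hk⟩ := Finite.exists_max hX.eigenvalues
  set U := hX.eigenvectorUnitary
  set t := max (hX.eigenvalues k) 0
  set g : Fin d → ℝ := Pi.single k t - hX.eigenvalues
  have hg : ∀ p, 0 ≤ g p := by
    intro p
    by_cases hpk : p = k
    · subst hpk; simp [g, t]
    · have hp : hX.eigenvalues p ≤ 0 := not_lt.mp fun hp =>
        hpk (hX.eq_of_eigenvalues_pos hw hp (hp.trans_le (hk p)))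
      simp [g, hpk, hp]
  refine ⟨t, le_max_right _ _, max_le ((le_abs_self _).trans (hX.abs_eigenvalues_le_norm k))
    (norm_nonneg X), fun i => U i k, ?_,
    Unitary.conjStarAlgAut ℂ _ U (diagonal (Complex.ofReal ∘ g)), ?_, ?_⟩
  · exact norm_toLp_eq_one_iff.mp (hX.eigenvectorBasis.orthonormal.1 k)
  · rw [Unitary.conjStarAlgAut_apply, star_eq_conjTranspose]
    exact (posSemidef_diagonal_iff.mpr fun p => Complex.zero_le_real.mpr (hg p)
      ).mul_mul_conjTranspose_same _
  · have hσ : t • pureState (fun i => U i k) =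
        Unitary.conjStarAlgAut ℂ _ U (diagonal (Pi.single k (t : ℂ))) := by
      rw [conjStarAlgAut_diagonal_single, pureState, Complex.coe_smul]
    conv_lhs => rw [hX.spectral_theorem]
    rw [hσ, ← map_sub, diagonal_sub]
    congr 2
    funext p
    by_cases hpk : p = k
    · subst hpk; simp [g]
    · simp [g, hpk]

theorem exists_pos_le_norm_measMap_of_norm_eq_one {d l m : ℕ}
    {Q : Fin l → Fin m → Matrix (Fin d) (Fin d) ℂ} (hQ : IsMeasScheme Q) (hdet : DeterminesPure Q)
    (hl : 0 < l) :
    ∃ c > (0 : ℝ), ∀ t ∈ Set.Icc (0 : ℝ) 1, ∀ v : Fin d → ℂ, ∑ k, Complex.normSq (v k) = 1 →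
      ∀ N : Matrix (Fin d) (Fin d) ℂ, N.PosSemidef → ‖N‖ ≤ 2 → ‖t • pureState v - N‖ = 1 →
        c ≤ ‖measMap Q (t • pureState v - N)‖ := by
  let Φ : ℝ × (Fin d → ℂ) × Matrix (Fin d) (Fin d) ℂ → Matrix (Fin d) (Fin d) ℂ :=
    fun p => p.1 • pureState p.2.1 - p.2.2
  have hΦ : Continuous Φ :=
    (continuous_fst.smul (continuous_pureState.comp (continuous_fst.comp continuous_snd))).sub
      (continuous_snd.comp continuous_snd)
  have hK : IsCompact ((Set.Icc 0 1 ×ˢ {v | ∑ k, Complex.normSq (v k) = 1} ×ˢ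
      ({N | N.PosSemidef} ∩ Metric.closedBall 0 2)) ∩ Φ ⁻¹' {X | ‖X‖ = 1}) :=
    (isCompact_Icc.prod (isCompact_setOf_sum_normSq_eq_one.prod
      ((isCompact_closedBall 0 2).inter_left isClosed_setOf_posSemidef))).inter_right
      ((isClosed_eq continuous_norm continuous_const).preimage hΦ)
  obtain ⟨c, hc, hmin⟩ := hK.exists_forall_le'
    (continuous_norm.comp ((continuous_measMap Q).comp hΦ)).continuousOn (a := 0) <| by
    rintro ⟨t, v, N⟩ ⟨⟨ht, hv, hN, -⟩, hX⟩
    refine norm_pos_iff.mpr fun h0 => ?_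
    have hNσ : N = t • pureState v := hdet.eq_smul_pureState hQ hl ht.1 hv hN
      (sub_eq_zero.mp (by simpa [Φ, measMap_sub] using h0)).symm
    simp [Φ, hNσ] at hX
  exact ⟨c, hc, fun t ht v hv N hN hN2 hX =>
    hmin (t, v, N) ⟨⟨ht, hv, hN, mem_closedBall_zero_iff.mpr hN2⟩, hX⟩⟩

theorem exists_pos_mul_norm_le_norm_measMap_smul_pureState_sub {d l m : ℕ}
    {Q : Fin l → Fin m → Matrix (Fin d) (Fin d) ℂ} (hQ : IsMeasScheme Q)
    (hdet : DeterminesPure Q) (hl : 0 < l) :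
    ∃ c > (0 : ℝ), ∀ t : ℝ, 0 ≤ t → ∀ v : Fin d → ℂ, ∑ k, Complex.normSq (v k) = 1 →
      ∀ N : Matrix (Fin d) (Fin d) ℂ, N.PosSemidef → t ≤ ‖t • pureState v - N‖ →
        c * ‖t • pureState v - N‖ ≤ ‖measMap Q (t • pureState v - N)‖ := by
  obtain ⟨c, hc, hbound⟩ := exists_pos_le_norm_measMap_of_norm_eq_one hQ hdet hl
  refine ⟨c, hc, fun t ht v hv N hN htX => ?_⟩
  set X := t • pureState v - N
  rcases eq_or_ne X 0 with hX0 | hX0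
  · simp [hX0]
  have hXpos : 0 < ‖X‖ := norm_pos_iff.mpr hX0
  have hNX : ‖N‖ ≤ 2 * ‖X‖ := calc
    ‖N‖ = ‖t • pureState v - X‖ := by rw [sub_sub_cancel]
    _ ≤ t + ‖X‖ := by
      simpa [norm_smul, norm_pureState hv, abs_of_nonneg ht] using norm_sub_le (t • pureState v) X
    _ ≤ 2 * ‖X‖ := by linarith
  set r := ‖X‖⁻¹
  have hr : 0 < r := inv_pos.mpr hXpos
  have hrX : (r * t) • pureState v - r • N = r • X := by rw [smul_sub, smul_smul]
  have key := hbound (r * t) ⟨by positivity, ?_⟩ v hv (r • N) (hN.smul hr.le) ?_ ?_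
  · rw [hrX, measMap_smul, norm_smul, Real.norm_of_nonneg hr.le] at key
    rwa [← div_le_iff₀' hr, div_inv_eq_mul] at key
  · rw [mul_comm, ← le_div_iff₀ hr, div_inv_eq_mul, one_mul]; exact htX
  · rw [norm_smul, Real.norm_of_nonneg hr.le, ← le_div_iff₀' hr, div_inv_eq_mul]; exact hNX
  · rw [hrX, norm_smul, Real.norm_of_nonneg hr.le, inv_mul_cancel₀ hXpos.ne']

theorem exists_pos_mul_norm_le_norm_measMap_pureState_sub {d l m : ℕ} (hd : 0 < d) (hl : 0 < l)
    {Q : Fin l → Fin m → Matrix (Fin d) (Fin d) ℂ} (hQ : IsMeasScheme Q)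
    (hdet : DeterminesPure Q) :
    ∃ c > (0 : ℝ), ∀ ψ : Fin d → ℂ, ∀ Y : Matrix (Fin d) (Fin d) ℂ, Y.PosSemidef →
        c * ‖pureState ψ - Y‖ ≤ ‖measMap Q (pureState ψ - Y)‖ := by
  obtain ⟨c, hc, hbound⟩ := exists_pos_mul_norm_le_norm_measMap_smul_pureState_sub hQ hdet hl
  refine ⟨c, hc, fun ψ Y hY => ?_⟩
  have hw : ∀ u, star ψ ⬝ᵥ u = 0 → (star u ⬝ᵥ (pureState ψ - Y) *ᵥ u).re ≤ 0 := fun u hu => by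
    rw [sub_mulVec, pureState_mulVec_of_orthogonal hu, zero_sub, dotProduct_neg, Complex.neg_re,
      neg_nonpos]
    exact hY.re_dotProduct_nonneg u
  obtain ⟨t, ht, htX, v, hv, N, hN, hXeq⟩ :=
    ((posSemidef_pureState ψ).1.sub hY.1).exists_eq_smul_pureState_sub hd hw
  rw [hXeq] at htX ⊢
  exact hbound t ht v hv N hN htX

lemma norm_sub_le_two_mul_of_norm_sub_add_le {E : Type*} [SeminormedAddCommGroup E] {a y f : E}
    (h : ‖y - (a + f)‖ ≤ ‖a - (a + f)‖) : ‖a - y‖ ≤ 2 * ‖f‖ := by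
  have hf : ‖a - (a + f)‖ = ‖f‖ := by simp
  calc ‖a - y‖ ≤ ‖a - (a + f)‖ + ‖y - (a + f)‖ := by
        simpa [norm_sub_rev y] using norm_sub_le_norm_sub_add_norm_sub a (a + f) y
    _ ≤ 2 * ‖f‖ := by linarith

theorem stmt15 {d l m : ℕ} (hd : 0 < d) (hl : 0 < l)
    (Q : Fin l → Fin m → Matrix (Fin d) (Fin d) ℂ) (hQ : IsMeasScheme Q)
    (hdet : DeterminesPure Q) :
    ∃ C > (0 : ℝ), ∀ ε > (0 : ℝ), ∀ ψ : Fin d → ℂ, (∑ k, Complex.normSq (ψ k)) = 1 →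
      ∀ f : Matrix (Fin l) (Fin m) ℝ, frobNorm f ≤ ε →
        ∀ Y : Matrix (Fin d) (Fin d) ℂ, Y.PosSemidef →
          (∀ Z : Matrix (Fin d) (Fin d) ℂ, Z.PosSemidef →
            frobNorm (measMap Q Y - (measMap Q (pureState ψ) + f)) ≤
              frobNorm (measMap Q Z - (measMap Q (pureState ψ) + f))) →
          frobNorm (Y - pureState ψ) ≤ C * ε := by
  obtain ⟨c, hc, hstable⟩ := exists_pos_mul_norm_le_norm_measMap_pureState_sub hd hl hQ hdet
  refine ⟨2 / c, by positivity, fun ε _ ψ _ f hf Y hY hmin => ?_⟩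
  simp only [frobNorm_eq_norm] at hf hmin ⊢
  have hmeas : ‖measMap Q (pureState ψ - Y)‖ ≤ 2 * ε := by
    rw [measMap_sub]
    linarith [norm_sub_le_two_mul_of_norm_sub_add_le (hmin _ (posSemidef_pureState ψ))]
  rw [norm_sub_rev, div_mul_eq_mul_div, le_div_iff₀' hc]
  exact (hstable ψ Y hY).trans hmeas
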